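/- Let n, k be positive integers with k ≤ n, let 𝔦 ⊂ {1,…,n} be an index set of cardinality k with complement 𝔦°, let A : ℝ → ℂ^{n×n} be continuous, and let S : ℝ → ℂ^{n×n} be differentiable with S'(x) = A(x)·S(x) and S(x₀) = I_n. Fix ŷ₀ ∈ ℂ^{(n−k)×k} and define, wherever the inverse exists, ŷ(x) := (S_{𝔦°,𝔦}(x) + S_{𝔦°,𝔦°}(x)·ŷ₀)·(S_{𝔦,𝔦}(x) + S_{𝔦,𝔦°}(x)·ŷ₀)^{−1}, where S_{𝔭,𝔮} denotes the 𝔭×𝔮 submatrix of S. Then on any open interval containing x₀ on which S_{𝔦,𝔦}(x) + S_{𝔦,𝔦°}(x)·ŷ₀ is invertible, ŷ is differentiable, satisfies ŷ(x₀) = ŷ₀, and satisfies the Riccati equation ŷ'(x) = c(x) + d(x)·ŷ(x) − ŷ(x)·a(x) − ŷ(x)·b(x)·ŷ(x), where a, b, c, d are the 𝔦×𝔦, 𝔦×𝔦°, 𝔦°×𝔦, 𝔦°×𝔦° submatrices of A. -/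

import Mathlib

open Matrix

/-- Entrywise derivative of a matrix-valued function of a real variable. -/
def MHasDerivAt {m k : Type*} (f : ℝ → Matrix m k ℂ) (f' : Matrix m k ℂ) (x : ℝ) : Prop :=
  ∀ i j, HasDerivAt (fun t => f t i j) (f' i j) x

/-- The order embedding of `Fin k` into `Fin n` enumerating a finset of cardinality `k`. -/
noncomputable def emb {n k : ℕ} (s : Finset (Fin n)) (h : s.card = k) : Fin k → Fin n :=
  fun i => (s.orderIsoOfFin h i : Fin n)

/-!
Write `P` for the `n × k` matrix with blocks `I_k` (rows `𝔦`) and `ŷ₀` (rows `𝔦°`). The blocks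
`U = (S P)_{𝔦}` and `V = (S P)_{𝔦°}` solve the linear system `U' = a U + b V`, `V' = c U + d V`,
and the quotient `ŷ = V U⁻¹` of any such solution satisfies the Riccati equation, since
`(V U⁻¹)' = V' U⁻¹ - V U⁻¹ U' U⁻¹`. At `x₀` we have `U = I_k` and `V = ŷ₀`.
-/

section Emb

variable {n k l : ℕ} (s : Finset (Fin n)) (h : s.card = k) (hc : sᶜ.card = l)

theorem emb_injective : Function.Injective (emb s h) :=
  (s.orderEmbOfFin h).injective

theorem emb_mem (i : Fin k) : emb s h i ∈ s :=
  s.orderEmbOfFin_mem h i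

theorem emb_ne_emb_compl (i : Fin k) (j : Fin l) : emb s h i ≠ emb sᶜ hc j := fun hij =>
  Finset.mem_compl.1 (hij ▸ emb_mem sᶜ hc j) (emb_mem s h i)

theorem sum_eq_sum_emb_add_sum_emb_compl {M : Type*} [AddCommMonoid M] (g : Fin n → M) :
    ∑ r, g r = ∑ i, g (emb s h i) + ∑ j, g (emb sᶜ hc j) := by
  rw [← (finSumEquivOfFinset h hc).sum_comp, Fintype.sum_sum_type]
  rfl

theorem submatrix_mul_eq_emb_add_emb_compl {α : Type*} [NonUnitalNonAssocSemiring α]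
    {ι κ ι' κ' : Type*} (M : Matrix ι (Fin n) α) (N : Matrix (Fin n) κ α)
    (r : ι' → ι) (c : κ' → κ) :
    (M * N).submatrix r c = M.submatrix r (emb s h) * N.submatrix (emb s h) c
      + M.submatrix r (emb sᶜ hc) * N.submatrix (emb sᶜ hc) c := by
  ext i j
  exact sum_eq_sum_emb_add_sum_emb_compl s h hc _

end Emb

theorem Matrix.submatrix_one_eq_zero {α ι κ ν : Type*} [Zero α] [One α] [DecidableEq ν]
    {r : ι → ν} {c : κ → ν} (h : ∀ i j, r i ≠ c j) : (1 : Matrix ν ν α).submatrix r c = 0 := by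
  ext i j
  exact one_apply_ne (h i j)

namespace MHasDerivAt

variable {m p q l o : Type*} {x : ℝ}

theorem submatrix {f : ℝ → Matrix m q ℂ} {f' : Matrix m q ℂ} (hf : MHasDerivAt f f' x)
    (r : l → m) (c : o → q) :
    MHasDerivAt (fun t => (f t).submatrix r c) (f'.submatrix r c) x :=
  fun i j => hf (r i) (c j)

theorem add {f g : ℝ → Matrix m q ℂ} {f' g' : Matrix m q ℂ}
    (hf : MHasDerivAt f f' x) (hg : MHasDerivAt g g' x) :
    MHasDerivAt (fun t => f t + g t) (f' + g') x :=
  fun i j => (hf i j).add (hg i j)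

theorem mul [Fintype p] {f : ℝ → Matrix m p ℂ} {g : ℝ → Matrix p q ℂ}
    {f' : Matrix m p ℂ} {g' : Matrix p q ℂ} (hf : MHasDerivAt f f' x) (hg : MHasDerivAt g g' x) :
    MHasDerivAt (fun t => f t * g t) (f' * g x + f x * g') x := fun i j => by
  simpa only [Matrix.mul_apply, Matrix.add_apply, Finset.sum_add_distrib] using
    HasDerivAt.fun_sum fun r _ => (hf i r).fun_mul (hg r j)

theorem mul_const [Fintype p] {f : ℝ → Matrix m p ℂ} {f' : Matrix m p ℂ}
    (hf : MHasDerivAt f f' x) (C : Matrix p q ℂ) :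
    MHasDerivAt (fun t => f t * C) (f' * C) x := by
  simpa using hf.mul (g := fun _ => C) (g' := 0) fun i j => hasDerivAt_const x (C i j)

section Inverse

-- `HasDerivAt` sees only the topology, so choosing the operator norm (to get a normed ring)
-- changes nothing in the statements below.
attribute [local instance] Matrix.linftyOpNormedAddCommGroup Matrix.linftyOpNormedSpace
  Matrix.linftyOpNormedRing Matrix.linftyOpNormedAlgebra

theorem _root_.mhasDerivAt_iff_hasDerivAt [Fintype m] [Fintype q] {f : ℝ → Matrix m q ℂ}
    {f' : Matrix m q ℂ} :
    MHasDerivAt f f' x ↔ HasDerivAt f f' x := by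
  let L : (m → q → ℂ) ≃L[ℝ] Matrix m q ℂ := (ofLinearEquiv ℝ).toContinuousLinearEquiv
  constructor
  · intro h
    exact L.hasFDerivAt.comp_hasDerivAt (f := fun t i j => f t i j) x
      (hasDerivAt_pi.2 fun i => hasDerivAt_pi.2 (h i))
  · intro h i j
    exact hasDerivAt_pi.1 (hasDerivAt_pi.1 (L.symm.hasFDerivAt.comp_hasDerivAt x h) i) j

theorem inv [Fintype m] [DecidableEq m] {U : ℝ → Matrix m m ℂ} {U' : Matrix m m ℂ}
    (hU : MHasDerivAt U U' x) (hu : IsUnit (U x)) :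
    MHasDerivAt (fun t => (U t)⁻¹) (-((U x)⁻¹ * U' * (U x)⁻¹)) x := by
  have : CompleteSpace (Matrix m m ℂ) := FiniteDimensional.complete ℝ _
  rw [mhasDerivAt_iff_hasDerivAt] at hU ⊢
  have h := (hasFDerivAt_ringInverse (𝕜 := ℝ) hu.unit).comp_hasDerivAt_of_eq x hU hu.unit_spec.symm
  simp only [Function.comp_def, ← nonsing_inv_eq_ringInverse, _root_.neg_apply,
    ContinuousLinearMap.mulLeftRight_apply, coe_units_inv, hu.unit_spec] at h
  exact h

end Inverse

theorem mul_inv_riccati [Fintype m] [DecidableEq m] [Fintype p]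
    {U : ℝ → Matrix m m ℂ} {V : ℝ → Matrix p m ℂ}
    {a : Matrix m m ℂ} {b : Matrix m p ℂ} {c : Matrix p m ℂ} {d : Matrix p p ℂ}
    (hU : MHasDerivAt U (a * U x + b * V x) x) (hV : MHasDerivAt V (c * U x + d * V x) x)
    (hu : IsUnit (U x)) :
    MHasDerivAt (fun t => V t * (U t)⁻¹)
      (c + d * (V x * (U x)⁻¹) - V x * (U x)⁻¹ * a - V x * (U x)⁻¹ * b * (V x * (U x)⁻¹)) x := by
  have hUU : U x * (U x)⁻¹ = 1 := mul_nonsing_inv _ ((isUnit_iff_isUnit_det _).1 hu)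
  convert hV.mul (hU.inv hu) using 1
  simp only [Matrix.mul_add, Matrix.add_mul, Matrix.mul_neg, Matrix.mul_assoc, hUU,
    Matrix.mul_one, sub_eq_add_neg, neg_add]
  abel

theorem submatrix_emb_add_mul {n k l : ℕ} (s : Finset (Fin n)) (h : s.card = k)
    (hc : sᶜ.card = l) {S : ℝ → Matrix (Fin n) (Fin n) ℂ} {A : Matrix (Fin n) (Fin n) ℂ} {x : ℝ}
    (hS : MHasDerivAt S (A * S x) x) (Y : Matrix (Fin l) (Fin k) ℂ) {ι : Type*} (r : ι → Fin n) :
    MHasDerivAt (fun t => (S t).submatrix r (emb s h) + (S t).submatrix r (emb sᶜ hc) * Y)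
      (A.submatrix r (emb s h)
          * ((S x).submatrix (emb s h) (emb s h) + (S x).submatrix (emb s h) (emb sᶜ hc) * Y)
        + A.submatrix r (emb sᶜ hc)
          * ((S x).submatrix (emb sᶜ hc) (emb s h) + (S x).submatrix (emb sᶜ hc) (emb sᶜ hc) * Y))
      x := by
  convert (hS.submatrix r (emb s h)).add ((hS.submatrix r (emb sᶜ hc)).mul_const Y) using 1
  rw [submatrix_mul_eq_emb_add_emb_compl s h hc, submatrix_mul_eq_emb_add_emb_compl s h hc]
  simp only [Matrix.mul_add, Matrix.add_mul, Matrix.mul_assoc]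
  abel

end MHasDerivAt

theorem mobius_action_solves_riccati_general
    (n k : ℕ)
    (𝔦 : Finset (Fin n)) (h𝔦 : 𝔦.card = k) (h𝔦c : 𝔦ᶜ.card = n - k)
    (A : ℝ → Matrix (Fin n) (Fin n) ℂ)
    (S : ℝ → Matrix (Fin n) (Fin n) ℂ) (x₀ : ℝ)
    (hS : ∀ x, MHasDerivAt S (A x * S x) x) (hS0 : S x₀ = 1)
    (yh₀ : Matrix (Fin (n - k)) (Fin k) ℂ) :
    ∀ a b : ℝ, x₀ ∈ Set.Ioo a b →
      (∀ x ∈ Set.Ioo a b,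
        IsUnit ((S x).submatrix (emb 𝔦 h𝔦) (emb 𝔦 h𝔦)
          + (S x).submatrix (emb 𝔦 h𝔦) (emb 𝔦ᶜ h𝔦c) * yh₀)) →
      (fun x => ((S x).submatrix (emb 𝔦ᶜ h𝔦c) (emb 𝔦 h𝔦)
            + (S x).submatrix (emb 𝔦ᶜ h𝔦c) (emb 𝔦ᶜ h𝔦c) * yh₀)
          * ((S x).submatrix (emb 𝔦 h𝔦) (emb 𝔦 h𝔦)
            + (S x).submatrix (emb 𝔦 h𝔦) (emb 𝔦ᶜ h𝔦c) * yh₀)⁻¹) x₀ = yh₀ ∧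
      ∀ x ∈ Set.Ioo a b,
        MHasDerivAt
          (fun t => ((S t).submatrix (emb 𝔦ᶜ h𝔦c) (emb 𝔦 h𝔦)
              + (S t).submatrix (emb 𝔦ᶜ h𝔦c) (emb 𝔦ᶜ h𝔦c) * yh₀)
            * ((S t).submatrix (emb 𝔦 h𝔦) (emb 𝔦 h𝔦)
              + (S t).submatrix (emb 𝔦 h𝔦) (emb 𝔦ᶜ h𝔦c) * yh₀)⁻¹)
          (((A x).submatrix (emb 𝔦ᶜ h𝔦c) (emb 𝔦 h𝔦)
            + (A x).submatrix (emb 𝔦ᶜ h𝔦c) (emb 𝔦ᶜ h𝔦c)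
              * (((S x).submatrix (emb 𝔦ᶜ h𝔦c) (emb 𝔦 h𝔦)
                  + (S x).submatrix (emb 𝔦ᶜ h𝔦c) (emb 𝔦ᶜ h𝔦c) * yh₀)
                * ((S x).submatrix (emb 𝔦 h𝔦) (emb 𝔦 h𝔦)
                  + (S x).submatrix (emb 𝔦 h𝔦) (emb 𝔦ᶜ h𝔦c) * yh₀)⁻¹))
            - (((S x).submatrix (emb 𝔦ᶜ h𝔦c) (emb 𝔦 h𝔦)
                  + (S x).submatrix (emb 𝔦ᶜ h𝔦c) (emb 𝔦ᶜ h𝔦c) * yh₀)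
                * ((S x).submatrix (emb 𝔦 h𝔦) (emb 𝔦 h𝔦)
                  + (S x).submatrix (emb 𝔦 h𝔦) (emb 𝔦ᶜ h𝔦c) * yh₀)⁻¹)
              * (A x).submatrix (emb 𝔦 h𝔦) (emb 𝔦 h𝔦)
            - (((S x).submatrix (emb 𝔦ᶜ h𝔦c) (emb 𝔦 h𝔦)
                  + (S x).submatrix (emb 𝔦ᶜ h𝔦c) (emb 𝔦ᶜ h𝔦c) * yh₀)
                * ((S x).submatrix (emb 𝔦 h𝔦) (emb 𝔦 h𝔦)
                  + (S x).submatrix (emb 𝔦 h𝔦) (emb 𝔦ᶜ h𝔦c) * yh₀)⁻¹)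
              * (A x).submatrix (emb 𝔦 h𝔦) (emb 𝔦ᶜ h𝔦c)
              * (((S x).submatrix (emb 𝔦ᶜ h𝔦c) (emb 𝔦 h𝔦)
                  + (S x).submatrix (emb 𝔦ᶜ h𝔦c) (emb 𝔦ᶜ h𝔦c) * yh₀)
                * ((S x).submatrix (emb 𝔦 h𝔦) (emb 𝔦 h𝔦)
                  + (S x).submatrix (emb 𝔦 h𝔦) (emb 𝔦ᶜ h𝔦c) * yh₀)⁻¹))
          x := by
  intro _ _ _ hunit
  constructor
  · simp only [hS0, submatrix_one _ (emb_injective 𝔦 h𝔦), submatrix_one _ (emb_injective 𝔦ᶜ h𝔦c),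
      submatrix_one_eq_zero (emb_ne_emb_compl 𝔦 h𝔦 h𝔦c),
      submatrix_one_eq_zero fun i j => (emb_ne_emb_compl 𝔦 h𝔦 h𝔦c j i).symm,
      Matrix.zero_mul, Matrix.one_mul, zero_add, add_zero, inv_one, Matrix.mul_one]
  · intro x hx
    exact MHasDerivAt.mul_inv_riccati ((hS x).submatrix_emb_add_mul 𝔦 h𝔦 h𝔦c yh₀ _)
      ((hS x).submatrix_emb_add_mul 𝔦 h𝔦 h𝔦c yh₀ _) (hunit x hx)

/-- The Möbius (linear fractional) action of the fundamental solution `S` of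
`S' = A(x)·S`, `S(x₀) = I` on Riccati initial data `ŷ₀`: on any open interval
containing `x₀` where `S_{𝔦,𝔦} + S_{𝔦,𝔦°}·ŷ₀` is invertible, the map
`ŷ = (S_{𝔦°,𝔦} + S_{𝔦°,𝔦°}·ŷ₀)·(S_{𝔦,𝔦} + S_{𝔦,𝔦°}·ŷ₀)⁻¹` is differentiable,
equals `ŷ₀` at `x₀`, and satisfies the Riccati equation. -/
theorem mobius_action_solves_riccati
    (n k : ℕ) (hn : 0 < n) (hk : 0 < k) (hkn : k ≤ n)
    (𝔦 : Finset (Fin n)) (h𝔦 : 𝔦.card = k) (h𝔦c : 𝔦ᶜ.card = n - k)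
    (A : ℝ → Matrix (Fin n) (Fin n) ℂ) (hA : Continuous A)
    (S : ℝ → Matrix (Fin n) (Fin n) ℂ) (x₀ : ℝ)
    (hS : ∀ x, MHasDerivAt S (A x * S x) x) (hS0 : S x₀ = 1)
    (yh₀ : Matrix (Fin (n - k)) (Fin k) ℂ) :
    ∀ a b : ℝ, x₀ ∈ Set.Ioo a b →
      (∀ x ∈ Set.Ioo a b,
        IsUnit ((S x).submatrix (emb 𝔦 h𝔦) (emb 𝔦 h𝔦)
          + (S x).submatrix (emb 𝔦 h𝔦) (emb 𝔦ᶜ h𝔦c) * yh₀)) →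
      (fun x => ((S x).submatrix (emb 𝔦ᶜ h𝔦c) (emb 𝔦 h𝔦)
            + (S x).submatrix (emb 𝔦ᶜ h𝔦c) (emb 𝔦ᶜ h𝔦c) * yh₀)
          * ((S x).submatrix (emb 𝔦 h𝔦) (emb 𝔦 h𝔦)
            + (S x).submatrix (emb 𝔦 h𝔦) (emb 𝔦ᶜ h𝔦c) * yh₀)⁻¹) x₀ = yh₀ ∧
      ∀ x ∈ Set.Ioo a b,
        MHasDerivAt
          (fun t => ((S t).submatrix (emb 𝔦ᶜ h𝔦c) (emb 𝔦 h𝔦)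
              + (S t).submatrix (emb 𝔦ᶜ h𝔦c) (emb 𝔦ᶜ h𝔦c) * yh₀)
            * ((S t).submatrix (emb 𝔦 h𝔦) (emb 𝔦 h𝔦)
              + (S t).submatrix (emb 𝔦 h𝔦) (emb 𝔦ᶜ h𝔦c) * yh₀)⁻¹)
          (((A x).submatrix (emb 𝔦ᶜ h𝔦c) (emb 𝔦 h𝔦)
            + (A x).submatrix (emb 𝔦ᶜ h𝔦c) (emb 𝔦ᶜ h𝔦c)
              * (((S x).submatrix (emb 𝔦ᶜ h𝔦c) (emb 𝔦 h𝔦)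
                  + (S x).submatrix (emb 𝔦ᶜ h𝔦c) (emb 𝔦ᶜ h𝔦c) * yh₀)
                * ((S x).submatrix (emb 𝔦 h𝔦) (emb 𝔦 h𝔦)
                  + (S x).submatrix (emb 𝔦 h𝔦) (emb 𝔦ᶜ h𝔦c) * yh₀)⁻¹))
            - (((S x).submatrix (emb 𝔦ᶜ h𝔦c) (emb 𝔦 h𝔦)
                  + (S x).submatrix (emb 𝔦ᶜ h𝔦c) (emb 𝔦ᶜ h𝔦c) * yh₀)
                * ((S x).submatrix (emb 𝔦 h𝔦) (emb 𝔦 h𝔦)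
                  + (S x).submatrix (emb 𝔦 h𝔦) (emb 𝔦ᶜ h𝔦c) * yh₀)⁻¹)
              * (A x).submatrix (emb 𝔦 h𝔦) (emb 𝔦 h𝔦)
            - (((S x).submatrix (emb 𝔦ᶜ h𝔦c) (emb 𝔦 h𝔦)
                  + (S x).submatrix (emb 𝔦ᶜ h𝔦c) (emb 𝔦ᶜ h𝔦c) * yh₀)
                * ((S x).submatrix (emb 𝔦 h𝔦) (emb 𝔦 h𝔦)
                  + (S x).submatrix (emb 𝔦 h𝔦) (emb 𝔦ᶜ h𝔦c) * yh₀)⁻¹)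
              * (A x).submatrix (emb 𝔦 h𝔦) (emb 𝔦ᶜ h𝔦c)
              * (((S x).submatrix (emb 𝔦ᶜ h𝔦c) (emb 𝔦 h𝔦)
                  + (S x).submatrix (emb 𝔦ᶜ h𝔦c) (emb 𝔦ᶜ h𝔦c) * yh₀)
                * ((S x).submatrix (emb 𝔦 h𝔦) (emb 𝔦 h𝔦)
                  + (S x).submatrix (emb 𝔦 h𝔦) (emb 𝔦ᶜ h𝔦c) * yh₀)⁻¹))
          x :=
  mobius_action_solves_riccati_general n k 𝔦 h𝔦 h𝔦c A S x₀ hS hS0 yh₀
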